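/- arXiv:1203.6604 — 6 statements merged into one kernel-verified Lean document; each statement's English description precedes it below -/
import Mathlib

section
/- For a prime p, the set of points {(x, x² mod p) : x = 0, ..., p-1} on the discrete torus Z_p × Z_p contains no three points in a line; that is, no three distinct elements of {(x, x²) : x ∈ Z_p} lie in a common coset of a cyclic subgroup of Z_p × Z_p. -/
/-- Three points are "in a line" on a discrete torus (abelian group) `G` if they lie in a
common coset of a cyclic subgroup of `G`. `S` has no three in a line if no three distinct
elements of `S` lie in such a coset. -/
def NoThreeInLine {G : Type*} [AddCommGroup G] (S : Set G) : Prop :=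
  ∀ a ∈ S, ∀ b ∈ S, ∀ c ∈ S, a ≠ b → a ≠ c → b ≠ c →
    ¬ ∃ g h : G, a - g ∈ AddSubgroup.zmultiples h ∧ b - g ∈ AddSubgroup.zmultiples h ∧
      c - g ∈ AddSubgroup.zmultiples h

/-- `T G` is the maximum size of a subset of `G` with no three elements in a common coset
of a cyclic subgroup. -/
noncomputable def T (G : Type*) [AddCommGroup G] : ℕ :=
  sSup {n | ∃ S : Set G, S.Finite ∧ S.ncard = n ∧ NoThreeInLine S}

/-- A subgroup is a maximal cyclic subgroup if it is cyclic and maximal with respect to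
inclusion among cyclic subgroups. -/
def IsMaximalCyclic {G : Type*} [AddCommGroup G] (H : AddSubgroup G) : Prop :=
  (∃ g, H = AddSubgroup.zmultiples g) ∧
  ∀ K : AddSubgroup G, (∃ g, K = AddSubgroup.zmultiples g) → H ≤ K → H = K

theorem stmt6 (p : ℕ) (hp : p.Prime) :
    NoThreeInLine {v : ZMod p × ZMod p | ∃ x : ZMod p, v = (x, x ^ 2)} := by
  haveI : Fact p.Prime := ⟨hp⟩
  rintro a ⟨x, rfl⟩ b ⟨y, rfl⟩ c ⟨z, rfl⟩ hab hac hbc ⟨g, h, hga, hgb, hgc⟩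
  obtain ⟨m, hm⟩ := AddSubgroup.mem_zmultiples_iff.mp hga
  obtain ⟨n, hn⟩ := AddSubgroup.mem_zmultiples_iff.mp hgb
  obtain ⟨k, hk⟩ := AddSubgroup.mem_zmultiples_iff.mp hgc
  have hxy : x ≠ y := fun e => hab (by rw [e])
  have hxz : x ≠ z := fun e => hac (by rw [e])
  have hyz : y ≠ z := fun e => hbc (by rw [e])
  have e1 : (m - n) • h = ((x, x ^ 2) : ZMod p × ZMod p) - (y, y ^ 2) := by
    rw [sub_smul, hm, hn]; abel
  have e2 : (m - k) • h = ((x, x ^ 2) : ZMod p × ZMod p) - (z, z ^ 2) := by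
    rw [sub_smul, hm, hk]; abel
  have f1 : ((m - n : ℤ) : ZMod p) * h.1 = x - y := by
    have := congrArg Prod.fst e1
    simpa [Prod.smul_def, zsmul_eq_mul] using this
  have f2 : ((m - n : ℤ) : ZMod p) * h.2 = x ^ 2 - y ^ 2 := by
    have := congrArg Prod.snd e1
    simpa [Prod.smul_def, zsmul_eq_mul] using this
  have g1 : ((m - k : ℤ) : ZMod p) * h.1 = x - z := by
    have := congrArg Prod.fst e2
    simpa [Prod.smul_def, zsmul_eq_mul] using this
  have g2 : ((m - k : ℤ) : ZMod p) * h.2 = x ^ 2 - z ^ 2 := by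
    have := congrArg Prod.snd e2
    simpa [Prod.smul_def, zsmul_eq_mul] using this
  have hM : ((m - n : ℤ) : ZMod p) ≠ 0 := by
    intro e; rw [e, zero_mul] at f1
    exact hxy (by linear_combination -f1)
  have hK : ((m - k : ℤ) : ZMod p) ≠ 0 := by
    intro e; rw [e, zero_mul] at g1
    exact hxz (by linear_combination -g1)
  have h1ne : h.1 ≠ 0 := by
    intro e; rw [e, mul_zero] at f1
    exact hxy (by linear_combination -f1)
  -- from f1, f2: h.2 = h.1 * (x + y)
  have key1 : h.2 = h.1 * (x + y) := by
    have : ((m - n : ℤ) : ZMod p) * h.2 = ((m - n : ℤ) : ZMod p) * (h.1 * (x + y)) := by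
      linear_combination f2 - (x + y) * f1
    exact mul_left_cancel₀ hM this
  have key2 : h.2 = h.1 * (x + z) := by
    have : ((m - k : ℤ) : ZMod p) * h.2 = ((m - k : ℤ) : ZMod p) * (h.1 * (x + z)) := by
      linear_combination g2 - (x + z) * g1
    exact mul_left_cancel₀ hK this
  have : h.1 * (x + y) = h.1 * (x + z) := key1 ▸ key2
  have := mul_left_cancel₀ h1ne this
  exact hyz (by linear_combination this)
end

section
/- For a prime p, the determinant of the matrix with rows (1,1,1), (x+ap, y+bp, z+cp), (px²+ip², py²+jp², pz²+kp²) is congruent to -p(x-y)(x-z)(y-z) modulo p², for any integers x,y,z,a,b,c,i,j,k. -/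
/-!
Dividing the last row by `p` leaves a matrix congruent modulo `p` to the transposed Vandermonde
matrix of `x, y, z`, and the determinant respects congruences of entries. So the determinant is
`p` times the Vandermonde determinant modulo `p ^ 2`.
-/

open Matrix

theorem Matrix.dvd_det_sub_det {n R : Type*} [Fintype n] [DecidableEq n] [CommRing R] {p : R}
    {A B : Matrix n n R} (h : ∀ i j, p ∣ A i j - B i j) : p ∣ A.det - B.det := by
  have hmap : (Ideal.Quotient.mk (Ideal.span {p})).mapMatrix A =
      (Ideal.Quotient.mk (Ideal.span {p})).mapMatrix B := by
    ext i j
    exact Ideal.Quotient.mk_eq_mk_iff_sub_mem _ _ |>.mpr (Ideal.mem_span_singleton.mpr (h i j))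
  rw [← Ideal.Quotient.eq_zero_iff_dvd, map_sub, RingHom.map_det, RingHom.map_det, hmap, sub_self]

theorem Matrix.det_transpose_vandermonde_three {R : Type*} [CommRing R] (x y z : R) :
    (vandermonde ![x, y, z])ᵀ.det = -((x - y) * (x - z) * (y - z)) := by
  rw [det_transpose, det_vandermonde]
  simp only [Nat.succ_eq_add_one, Nat.reduceAdd, Fin.prod_univ_succ, Fin.isValue, Fin.Ioi_zero_eq_map,
    cons_val_zero, Finset.prod_map, Fin.coe_succEmb, cons_val_succ, Finset.univ_unique, Fin.default_eq_zero,
    cons_val_fin_one, Finset.prod_const, Finset.card_singleton, pow_one, Fin.prod_Ioi_succ, Finset.map_singleton,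
    Fin.succ_zero_eq_one, Finset.prod_singleton, cons_val_one, sub_self, Fin.card_Ioi, tsub_self, Fin.val_eq_zero,
    pow_zero, mul_one]
  ring

theorem stmt8_general (p : ℕ) (x y z a b c i j k : ℤ) :
    Matrix.det !![1, 1, 1;
                  x + a * p, y + b * p, z + c * p;
                  p * x ^ 2 + i * p ^ 2, p * y ^ 2 + j * p ^ 2, p * z ^ 2 + k * p ^ 2] ≡
      -(p : ℤ) * (x - y) * (x - z) * (y - z) [ZMOD (p : ℤ) ^ 2] := by
  set N : Matrix (Fin 3) (Fin 3) ℤ := !![1, 1, 1;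
    x + a * p, y + b * p, z + c * p;
    x ^ 2 + i * p, y ^ 2 + j * p, z ^ 2 + k * p]
  have hfactor : Matrix.det !![1, 1, 1;
      x + a * p, y + b * p, z + c * p;
      p * x ^ 2 + i * p ^ 2, p * y ^ 2 + j * p ^ 2, p * z ^ 2 + k * p ^ 2] = p * N.det := by
    simp only [N, det_fin_three, of_apply, cons_val', cons_val_zero, cons_val_fin_one, cons_val_one,
      cons_val, one_mul]
    ring
  have hcongr : N.det ≡ (vandermonde ![x, y, z])ᵀ.det [ZMOD p] :=
    (Int.modEq_iff_dvd.mpr <| dvd_det_sub_det fun r s => by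
      fin_cases r <;> fin_cases s <;> simp [N, vandermonde_apply]).symm
  have hrhs : -(p : ℤ) * (x - y) * (x - z) * (y - z) = p * -((x - y) * (x - z) * (y - z)) := by
    ring
  rw [hfactor, sq, hrhs, ← det_transpose_vandermonde_three]
  exact hcongr.mul_left'

theorem stmt8 (p : ℕ) (hp : p.Prime) (x y z a b c i j k : ℤ) :
    Matrix.det !![1, 1, 1;
                  x + a * p, y + b * p, z + c * p;
                  p * x ^ 2 + i * p ^ 2, p * y ^ 2 + j * p ^ 2, p * z ^ 2 + k * p ^ 2] ≡
      -(p : ℤ) * (x - y) * (x - z) * (y - z) [ZMOD (p : ℤ) ^ 2] :=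
  stmt8_general p x y z a b c i j k
end

section
/- For any prime p, there exists a set of 2p points in Z_p × Z_{p²} such that no three distinct points lie in a common coset of a cyclic subgroup of Z_p × Z_{p²}. -/
namespace Stmt10Aux

variable (p : ℕ)

def pr : ZMod (p^2) →+* ZMod p := ZMod.castHom (dvd_pow_self p two_ne_zero) (ZMod p)

def fX (x : ZMod p) : ZMod p × ZMod (p^2) :=
  (x, (p : ZMod (p^2)) * ((x.val : ZMod (p^2)))^2)

def gY (x : ZMod p) : ZMod p × ZMod (p^2) :=
  (-x - 1, -((p : ZMod (p^2)) * ((x.val : ZMod (p^2)))^2) - 1)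

variable {p}

lemma pr_p (hp : p.Prime) : pr p (p : ZMod (p^2)) = 0 := by
  haveI : NeZero p := ⟨hp.ne_zero⟩
  simp [pr]

lemma pmul (hp : p.Prime) (y : ZMod (p^2)) (h : (p : ZMod (p^2)) * y = 0) : pr p y = 0 := by
  haveI : NeZero p := ⟨hp.ne_zero⟩
  haveI : NeZero (p^2) := ⟨pow_ne_zero 2 hp.ne_zero⟩
  have hy : ((p * y.val : ℕ) : ZMod (p^2)) = 0 := by
    push_cast
    rw [ZMod.natCast_val, ZMod.cast_id]
    exact h
  rw [ZMod.natCast_eq_zero_iff] at hy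
  have hd : p ∣ y.val := by
    have h2 : p * p ∣ p * y.val := by rwa [← pow_two]
    exact (mul_dvd_mul_iff_left (a := p) (by exact_mod_cast hp.ne_zero)).mp h2
  show (ZMod.castHom _ (ZMod p)) y = 0
  rw [ZMod.castHom_apply, ZMod.cast_eq_val, ZMod.natCast_eq_zero_iff]
  exact hd

lemma pr_val (hp : p.Prime) (x : ZMod p) : pr p ((x.val : ZMod (p^2))) = x := by
  haveI : NeZero p := ⟨hp.ne_zero⟩
  simp [pr, ZMod.natCast_val, ZMod.cast_id]

lemma diff_ff (x y : ZMod p) : fX p x - fX p y =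
    (x - y, (p : ZMod (p^2)) * ((x.val : ZMod (p^2))^2 - (y.val : ZMod (p^2))^2)) := by
  simp only [fX, Prod.mk_sub_mk, Prod.mk.injEq]
  exact ⟨trivial, by ring⟩

lemma diff_gg (x y : ZMod p) : gY p x - gY p y = fX p y - fX p x := by
  simp only [fX, gY, Prod.mk_sub_mk, Prod.mk.injEq]
  exact ⟨by ring, by ring⟩

lemma pr_diff_fg (hp : p.Prime) (x y : ZMod p) : pr p ((fX p x - gY p y).2) = 1 := by
  simp only [fX, gY, Prod.mk_sub_mk]
  rw [show (p : ZMod (p^2)) * (x.val : ZMod (p^2))^2 - (-((p : ZMod (p^2)) * ((y.val : ZMod (p^2)))^2) - 1)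
      = (p : ZMod (p^2)) * ((x.val : ZMod (p^2))^2 + (y.val : ZMod (p^2))^2) + 1 by ring]
  rw [map_add, map_mul, pr_p hp, map_one, zero_mul, zero_add]

/-- Mixed case  -/
lemma mix (hp : p.Prime) (h u v : ZMod p × ZMod (p^2)) (m n : ℤ)
    (hu : u = m • h) (hv : v = n • h) (hu2 : pr p u.2 ≠ 0) (hv2 : pr p v.2 = 0)
    (hv1 : v.1 ≠ 0) : False := by
  haveI : Fact p.Prime := ⟨hp⟩
  subst hu hv
  have h2 : pr p ((m • h).2) = (m : ZMod p) * pr p h.2 := by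
    rw [Prod.smul_snd, map_zsmul, zsmul_eq_mul]
  have hne : pr p h.2 ≠ 0 := by
    intro h0
    rw [h2, h0, mul_zero] at hu2
    exact hu2 rfl
  have hn0 : (n : ZMod p) = 0 := by
    rw [Prod.smul_snd, map_zsmul, zsmul_eq_mul] at hv2
    rcases mul_eq_zero.mp hv2 with h0 | h0
    · exact h0
    · exact absurd h0 hne
  apply hv1
  rw [Prod.smul_fst, zsmul_eq_mul, hn0, zero_mul]

/-- Same-part case -/
lemma core (hp : p.Prime) (h : ZMod p × ZMod (p^2)) (x1 x2 x3 : ZMod p) (m n : ℤ)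
    (hd1 : ((x1 - x2 : ZMod p), (p : ZMod (p^2)) * ((x1.val : ZMod (p^2))^2 - (x2.val : ZMod (p^2))^2)) = m • h)
    (hd2 : ((x1 - x3 : ZMod p), (p : ZMod (p^2)) * ((x1.val : ZMod (p^2))^2 - (x3.val : ZMod (p^2))^2)) = n • h)
    (h12 : x1 ≠ x2) (h13 : x1 ≠ x3) : x2 = x3 := by
  haveI : Fact p.Prime := ⟨hp⟩
  set X1 := ((x1.val : ZMod (p^2))) with hX1
  set X2 := ((x2.val : ZMod (p^2))) with hX2
  set X3 := ((x3.val : ZMod (p^2))) with hX3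
  have hfst : ∀ (k : ℤ) (w : ZMod p × ZMod (p^2)), (k • w).1 = (k : ZMod p) * w.1 :=
    fun k w => by rw [Prod.smul_fst, zsmul_eq_mul]
  have hsnd : ∀ (k : ℤ) (w : ZMod p × ZMod (p^2)), (k • w).2 = (k : ZMod (p^2)) * w.2 :=
    fun k w => by rw [Prod.smul_snd, zsmul_eq_mul]
  have key : n • (((x1 - x2 : ZMod p), (p : ZMod (p^2)) * (X1^2 - X2^2)) : ZMod p × ZMod (p^2))
      - m • (((x1 - x3 : ZMod p), (p : ZMod (p^2)) * (X1^2 - X3^2)) : ZMod p × ZMod (p^2)) = 0 := by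
    rw [hd1, hd2, smul_smul, smul_smul, mul_comm, sub_self]
  have k1 := congrArg Prod.fst key
  have k2 := congrArg Prod.snd key
  rw [Prod.fst_sub, hfst, hfst, Prod.fst_zero] at k1
  rw [Prod.snd_sub, hsnd, hsnd, Prod.snd_zero] at k2
  simp only at k1 k2
  -- second coordinates
  have k2' : (p : ZMod (p^2)) * ((n : ZMod (p^2)) * (X1^2 - X2^2) - (m : ZMod (p^2)) * (X1^2 - X3^2)) = 0 := by
    linear_combination k2
  have k2'' := pmul hp _ k2'
  rw [map_sub, map_mul, map_mul, map_sub, map_sub, map_pow, map_pow, map_pow,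
    pr_val hp, pr_val hp, pr_val hp, map_intCast, map_intCast] at k2''
  -- m nonzero mod p
  have hm : (m : ZMod p) ≠ 0 := by
    intro h0
    have hh := congrArg Prod.fst hd1
    rw [hfst] at hh
    simp only [h0, zero_mul] at hh
    exact h12 (sub_eq_zero.mp hh)
  have h13' : x1 - x3 ≠ 0 := sub_ne_zero.mpr h13
  have key2 : (m : ZMod p) * (x1 - x3) * (x3 - x2) = 0 := by
    linear_combination (x1 + x2) * k1 - k2''
  rcases mul_eq_zero.mp key2 with h0 | h0
  · rcases mul_eq_zero.mp h0 with h0 | h0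
    · exact absurd h0 hm
    · exact absurd h0 h13'
  · exact (sub_eq_zero.mp h0).symm

lemma pr_diff_ff (hp : p.Prime) (x y : ZMod p) : pr p ((fX p x - fX p y).2) = 0 := by
  rw [diff_ff]
  exact (map_mul _ _ _).trans (by rw [pr_p hp, zero_mul])

lemma pr_diff_gf (hp : p.Prime) (x y : ZMod p) : pr p ((gY p x - fX p y).2) = -1 := by
  rw [← neg_sub (fX p y) (gY p x), Prod.snd_neg, map_neg, pr_diff_fg hp, ]

lemma pr_diff_gg (hp : p.Prime) (x y : ZMod p) : pr p ((gY p x - gY p y).2) = 0 := by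
  rw [diff_gg]; exact pr_diff_ff hp y x

end Stmt10Aux

open Stmt10Aux in
theorem stmt10 (p : ℕ) (hp : p.Prime) :
    ∃ S : Set (ZMod p × ZMod (p ^ 2)), S.Finite ∧ S.ncard = 2 * p ∧ NoThreeInLine S := by
  haveI : Fact p.Prime := ⟨hp⟩
  haveI : NeZero p := ⟨hp.ne_zero⟩
  classical
  have hfinj : Function.Injective (fX p) := fun a b h => congrArg Prod.fst h
  have hginj : Function.Injective (gY p) := by
    intro a b h
    have h1 : -a - 1 = -b - 1 := congrArg Prod.fst h
    have h2 : a = b := by linear_combination -h1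
    exact h2
  have hone : (1 : ZMod p) ≠ 0 := one_ne_zero
  have hdisj : Disjoint (Set.range (fX p)) (Set.range (gY p)) := by
    rw [Set.disjoint_left]
    rintro z ⟨x, rfl⟩ ⟨y, hy⟩
    have h0 : pr p ((fX p x - gY p y).2) = 1 := pr_diff_fg hp x y
    rw [hy, sub_self] at h0
    simp only [Prod.snd_zero, map_zero] at h0
    exact hone h0.symm
  refine ⟨Set.range (fX p) ∪ Set.range (gY p),
    (Set.finite_range _).union (Set.finite_range _), ?_, ?_⟩
  · rw [Set.ncard_union_eq hdisj (Set.finite_range _) (Set.finite_range _)]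
    have c1 : (Set.range (fX p)).ncard = p := by
      rw [← Nat.card_coe_set_eq, Nat.card_range_of_injective hfinj, Nat.card_zmod]
    have c2 : (Set.range (gY p)).ncard = p := by
      rw [← Nat.card_coe_set_eq, Nat.card_range_of_injective hginj, Nat.card_zmod]
    rw [c1, c2]; ring
  · rintro a ha b hb c hc hab hac hbc ⟨g0, h, hA, hB, hC⟩
    rw [AddSubgroup.mem_zmultiples_iff] at hA hB hC
    obtain ⟨ka, hka⟩ := hA
    obtain ⟨kb, hkb⟩ := hB
    obtain ⟨kc, hkc⟩ := hC
    have dab : a - b = (ka - kb) • h := by rw [sub_smul, hka, hkb]; abel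
    have dac : a - c = (ka - kc) • h := by rw [sub_smul, hka, hkc]; abel
    have dbc : b - c = (kb - kc) • h := by rw [sub_smul, hkb, hkc]; abel
    have dba : b - a = (kb - ka) • h := by rw [sub_smul, hkb, hka]; abel
    rcases ha with ⟨x1, rfl⟩ | ⟨x1, rfl⟩ <;> rcases hb with ⟨x2, rfl⟩ | ⟨x2, rfl⟩ <;>
      rcases hc with ⟨x3, rfl⟩ | ⟨x3, rfl⟩
    · -- FFF
      have h12 : x1 ≠ x2 := fun e => hab (by rw [e])
      have h13 : x1 ≠ x3 := fun e => hac (by rw [e])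
      exact hbc (congrArg (fX p) (core hp h x1 x2 x3 (ka - kb) (ka - kc)
        ((diff_ff x1 x2).symm.trans dab) ((diff_ff x1 x3).symm.trans dac) h12 h13))
    · -- FFG
      exact mix hp h _ _ (ka - kc) (ka - kb) dac dab
        (by rw [pr_diff_fg hp]; exact hone) (pr_diff_ff hp x1 x2)
        (by rw [diff_ff]; exact sub_ne_zero.mpr (fun e => hab (by rw [e])))
    · -- FGF
      exact mix hp h _ _ (ka - kb) (ka - kc) dab dac
        (by rw [pr_diff_fg hp]; exact hone) (pr_diff_ff hp x1 x3)
        (by rw [diff_ff]; exact sub_ne_zero.mpr (fun e => hac (by rw [e])))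
    · -- FGG
      exact mix hp h _ _ (ka - kb) (kb - kc) dab dbc
        (by rw [pr_diff_fg hp]; exact hone) (pr_diff_gg hp x2 x3)
        (by rw [diff_gg, diff_ff]; exact sub_ne_zero.mpr (fun e => hbc (by rw [e])))
    · -- GFF
      exact mix hp h _ _ (kb - ka) (kb - kc) dba dbc
        (by rw [pr_diff_fg hp]; exact hone) (pr_diff_ff hp x2 x3)
        (by rw [diff_ff]; exact sub_ne_zero.mpr (fun e => hbc (by rw [e])))
    · -- GFG
      exact mix hp h _ _ (ka - kb) (ka - kc) dab dac
        (by rw [pr_diff_gf hp]; exact neg_ne_zero.mpr hone) (pr_diff_gg hp x1 x3)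
        (by rw [diff_gg, diff_ff]; exact sub_ne_zero.mpr (fun e => hac (by rw [e.symm])))
    · -- GGF
      exact mix hp h _ _ (ka - kc) (ka - kb) dac dab
        (by rw [pr_diff_gf hp]; exact neg_ne_zero.mpr hone) (pr_diff_gg hp x1 x2)
        (by rw [diff_gg, diff_ff]; exact sub_ne_zero.mpr (fun e => hab (by rw [e.symm])))
    · -- GGG
      have h12 : x1 ≠ x2 := fun e => hab (by rw [e])
      have h13 : x1 ≠ x3 := fun e => hac (by rw [e])
      exact hbc (congrArg (gY p) (core hp h x1 x2 x3 (kb - ka) (kc - ka)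
        ((diff_ff x1 x2).symm.trans ((diff_gg x2 x1).symm.trans dba))
        ((diff_ff x1 x3).symm.trans ((diff_gg x3 x1).symm.trans
          (by rw [sub_smul, hkc, hka]; abel))) h12 h13))
end

section
/- For any prime p, T(Z_p × Z_{p²}) = 2p, where T(G) is the maximal size of a subset of G with no three elements in a common coset of a cyclic subgroup. -/
/-- division-by-p lemma: if `p * C = 0` in `ZMod (p^2)` then `C` reduces to `0` mod `p`. -/
lemma pmul_eq_zero {p : ℕ} (hp : p.Prime) (C : ZMod (p ^ 2))
    (h : (p : ZMod (p ^ 2)) * C = 0) :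
    ZMod.castHom (dvd_pow_self p two_ne_zero) (ZMod p) C = 0 := by
  haveI : NeZero p := ⟨hp.ne_zero⟩
  haveI : NeZero (p ^ 2) := ⟨pow_ne_zero _ hp.ne_zero⟩
  obtain ⟨c, rfl⟩ : ∃ c : ℕ, C = (c : ZMod (p ^ 2)) :=
    ⟨C.val, by simp [ZMod.natCast_val, ZMod.cast_id]⟩
  have h2 : ((p * c : ℕ) : ZMod (p ^ 2)) = 0 := by push_cast; linear_combination h
  rw [ZMod.natCast_eq_zero_iff] at h2
  have h3 : p ∣ c := by
    rw [sq] at h2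
    exact (Nat.mul_dvd_mul_iff_left hp.pos).mp h2
  simp only [map_natCast]
  exact (ZMod.natCast_eq_zero_iff c p).mpr h3

lemma fin2_cast_ne {p : ℕ} (hp : p.Prime) {e f : Fin 2} (hef : e ≠ f) :
    ((e.val : ZMod p)) ≠ (f.val : ZMod p) := by
  haveI : Fact p.Prime := ⟨hp⟩
  fin_cases e <;> fin_cases f <;> simp_all

/-- The 2p-point configuration: two points per column, levels 0 and 1 mod p, with
second p-adic digit given by a parabola. -/
def lineF (p : ℕ) (x : ZMod p × Fin 2) : ZMod p × ZMod (p ^ 2) :=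
  (x.1, (x.2.val : ZMod (p ^ 2)) + (p : ZMod (p ^ 2)) * (x.1.val : ZMod (p ^ 2)) ^ 2)

lemma lineF_inj {p : ℕ} (hp : p.Prime) : Function.Injective (lineF p) := by
  haveI : Fact (1 < p ^ 2) := ⟨by have := hp.two_le; nlinarith⟩
  rintro ⟨i, e⟩ ⟨j, f⟩ hEq
  rw [lineF, lineF, Prod.mk.injEq] at hEq
  obtain ⟨h1, h2⟩ := hEq
  subst h1
  have h3 : ((e.val : ZMod (p ^ 2))) = (f.val : ZMod (p ^ 2)) := by
    field_simp at h2
    linear_combination h2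
  have : e = f := by fin_cases e <;> fin_cases f <;> simp_all
  rw [this]

lemma lineF_no3 {p : ℕ} (hp : p.Prime) : NoThreeInLine (Set.range (lineF p)) := by
  haveI : Fact p.Prime := ⟨hp⟩
  haveI : NeZero p := ⟨hp.ne_zero⟩
  rintro a ha b hb c hc hab hac hbc ⟨g, h, hga, hgb, hgc⟩
  obtain ⟨k₁, hk₁⟩ := AddSubgroup.mem_zmultiples_iff.mp hga
  obtain ⟨k₂, hk₂⟩ := AddSubgroup.mem_zmultiples_iff.mp hgb
  obtain ⟨k₃, hk₃⟩ := AddSubgroup.mem_zmultiples_iff.mp hgc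
  obtain ⟨⟨i, ei⟩, rfl⟩ := ha
  obtain ⟨⟨j, ej⟩, rfl⟩ := hb
  obtain ⟨⟨k, ek⟩, rfl⟩ := hc
  set m : ℤ := k₁ - k₂ with hm_def
  set n : ℤ := k₁ - k₃ with hn_def
  have hx : lineF p (i, ei) - lineF p (j, ej) = m • h := by
    rw [hm_def, sub_smul, hk₁, hk₂]; abel
  have hy : lineF p (i, ei) - lineF p (k, ek) = n • h := by
    rw [hn_def, sub_smul, hk₁, hk₃]; abel
  have hx1 : i - j = (m : ZMod p) * h.1 := by
    have := congrArg Prod.fst hx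
    simpa [lineF, Prod.fst_sub, Prod.smul_fst, zsmul_eq_mul] using this
  have hy1 : i - k = (n : ZMod p) * h.1 := by
    have := congrArg Prod.fst hy
    simpa [lineF, Prod.fst_sub, Prod.smul_fst, zsmul_eq_mul] using this
  have hx2 : ((ei.val : ZMod (p ^ 2)) + (p : ZMod (p ^ 2)) * (i.val : ZMod (p ^ 2)) ^ 2)
      - ((ej.val : ZMod (p ^ 2)) + (p : ZMod (p ^ 2)) * (j.val : ZMod (p ^ 2)) ^ 2)
      = (m : ZMod (p ^ 2)) * h.2 := by
    have := congrArg Prod.snd hx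
    simpa [lineF, Prod.snd_sub, Prod.smul_snd, zsmul_eq_mul] using this
  have hy2 : ((ei.val : ZMod (p ^ 2)) + (p : ZMod (p ^ 2)) * (i.val : ZMod (p ^ 2)) ^ 2)
      - ((ek.val : ZMod (p ^ 2)) + (p : ZMod (p ^ 2)) * (k.val : ZMod (p ^ 2)) ^ 2)
      = (n : ZMod (p ^ 2)) * h.2 := by
    have := congrArg Prod.snd hy
    simpa [lineF, Prod.snd_sub, Prod.smul_snd, zsmul_eq_mul] using this
  set r := ZMod.castHom (dvd_pow_self p two_ne_zero) (ZMod p) with hr_def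
  have hx2r : (ei.val : ZMod p) - (ej.val : ZMod p) = (m : ZMod p) * r h.2 := by
    have := congrArg r hx2
    simpa [map_sub, map_add, map_mul, map_pow, map_intCast, map_natCast,
      ZMod.natCast_self] using this
  have hy2r : (ei.val : ZMod p) - (ek.val : ZMod p) = (n : ZMod p) * r h.2 := by
    have := congrArg r hy2
    simpa [map_sub, map_add, map_mul, map_pow, map_intCast, map_natCast,
      ZMod.natCast_self] using this
  by_cases hij : ei = ej <;> by_cases hik : ei = ek
  · -- all three levels equal: use the parabola (second digit) argument
    subst hij; subst hik
    have hij' : i ≠ j := fun hh => hab (by rw [hh])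
    have hik' : i ≠ k := fun hh => hac (by rw [hh])
    have hjk' : j ≠ k := fun hh => hbc (by rw [hh])
    have hpC : (p : ZMod (p ^ 2)) *
        ((n : ZMod (p ^ 2)) * ((i.val : ZMod (p ^ 2)) ^ 2 - (j.val : ZMod (p ^ 2)) ^ 2)
          - (m : ZMod (p ^ 2)) * ((i.val : ZMod (p ^ 2)) ^ 2 - (k.val : ZMod (p ^ 2)) ^ 2))
        = 0 := by
      linear_combination (n : ZMod (p ^ 2)) * hx2 - (m : ZMod (p ^ 2)) * hy2
    have hrC := pmul_eq_zero hp _ hpC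
    simp only [map_sub, map_mul, map_pow, map_intCast, map_natCast] at hrC
    simp only [ZMod.natCast_val, ZMod.cast_id] at hrC
    -- hrC : (n : ZMod p) * (i^2 - j^2) - (m : ZMod p) * (i^2 - k^2) = 0
    have hL : (n : ZMod p) * (i - j) = (m : ZMod p) * (i - k) := by
      linear_combination (n : ZMod p) * hx1 - (m : ZMod p) * hy1
    have hm0 : (m : ZMod p) ≠ 0 := by
      intro h0
      rw [h0, zero_mul] at hx1
      exact hij' (sub_eq_zero.mp hx1)
    have hn0 : (n : ZMod p) ≠ 0 := by
      intro h0
      rw [h0, zero_mul] at hL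
      exact hm0 ((mul_eq_zero.mp hL.symm).resolve_right (sub_ne_zero.mpr hik'))
    have key : (n : ZMod p) * ((i - j) * (j - k)) = 0 := by
      linear_combination hrC - (i + k) * hL
    exact mul_ne_zero hn0
      (mul_ne_zero (sub_ne_zero.mpr hij') (sub_ne_zero.mpr hjk')) key
  · -- ei = ej, ei ≠ ek
    subst hij
    have hu : (m : ZMod p) * r h.2 = 0 := by rw [← hx2r, sub_self]
    have hv : (n : ZMod p) * r h.2 ≠ 0 := by
      rw [← hy2r]
      exact sub_ne_zero.mpr (fin2_cast_ne hp hik)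
    have hrh : r h.2 ≠ 0 := fun h0 => hv (by rw [h0, mul_zero])
    have hm0 : (m : ZMod p) = 0 := (mul_eq_zero.mp hu).resolve_right hrh
    rw [hm0, zero_mul] at hx1
    exact hab (by rw [sub_eq_zero.mp hx1])
  · -- ei ≠ ej, ei = ek
    subst hik
    have hu : (n : ZMod p) * r h.2 = 0 := by rw [← hy2r, sub_self]
    have hv : (m : ZMod p) * r h.2 ≠ 0 := by
      rw [← hx2r]
      exact sub_ne_zero.mpr (fin2_cast_ne hp hij)
    have hrh : r h.2 ≠ 0 := fun h0 => hv (by rw [h0, mul_zero])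
    have hn0 : (n : ZMod p) = 0 := (mul_eq_zero.mp hu).resolve_right hrh
    rw [hn0, zero_mul] at hy1
    exact hac (by rw [sub_eq_zero.mp hy1])
  · -- ei ≠ ej, ei ≠ ek, hence ej = ek
    have hjk : ej = ek := by fin_cases ei <;> fin_cases ej <;> fin_cases ek <;> simp_all
    subst hjk
    have heq : (m : ZMod p) * r h.2 = (n : ZMod p) * r h.2 := by
      rw [← hx2r, ← hy2r]
    have hrh : r h.2 ≠ 0 := by
      intro h0
      rw [h0, mul_zero] at hx2r
      exact sub_ne_zero.mpr (fin2_cast_ne hp hij) hx2r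
    have hmn : (m : ZMod p) = (n : ZMod p) := mul_right_cancel₀ hrh heq
    have hjk2 : i - j = i - k := by rw [hx1, hy1, hmn]
    exact hbc (by rw [sub_right_inj.mp hjk2])

lemma col_mem {p : ℕ} [NeZero p] (a : ZMod p × ZMod (p ^ 2)) (col : ZMod p) (h : a.1 = col) :
    a - (col, 0) ∈ AddSubgroup.zmultiples ((0, 1) : ZMod p × ZMod (p ^ 2)) := by
  rw [AddSubgroup.mem_zmultiples_iff]
  refine ⟨(a.2.val : ℤ), Prod.ext ?_ ?_⟩
  · simp [h]
  · simp [zsmul_eq_mul, ZMod.natCast_val, ZMod.cast_id]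

/-- Upper bound: a finite no-three-in-line set in `ZMod p × ZMod (p^2)` has at most
`2p` elements, since each of the `p` columns is a coset of a cyclic subgroup. -/
lemma upper_bound {p : ℕ} (hp : p.Prime) {S : Set (ZMod p × ZMod (p ^ 2))}
    (hfin : S.Finite) (hS : NoThreeInLine S) : S.ncard ≤ 2 * p := by
  classical
  haveI : Fact p.Prime := ⟨hp⟩
  haveI : NeZero p := ⟨hp.ne_zero⟩
  set t := hfin.toFinset with ht_def
  have hcol : ∀ col : ZMod p, (t.filter (fun x => x.1 = col)).card ≤ 2 := by
    intro col
    by_contra hlt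
    push_neg at hlt
    obtain ⟨a, b, c, ha, hb, hc, hab, hac, hbc⟩ := Finset.two_lt_card_iff.mp hlt
    simp only [Finset.mem_filter, Set.Finite.mem_toFinset, ht_def] at ha hb hc
    exact hS a ha.1 b hb.1 c hc.1 hab hac hbc ⟨(col, 0), (0, 1),
      col_mem a col ha.2, col_mem b col hb.2, col_mem c col hc.2⟩
  have hcard : t.card = ∑ col ∈ (Finset.univ : Finset (ZMod p)),
      (t.filter (fun x => x.1 = col)).card :=
    Finset.card_eq_sum_card_fiberwise (fun x _ => Finset.mem_univ x.1)
  have : t.card ≤ 2 * p := by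
    rw [hcard]
    calc ∑ col ∈ (Finset.univ : Finset (ZMod p)), (t.filter (fun x => x.1 = col)).card
        ≤ ∑ _col ∈ (Finset.univ : Finset (ZMod p)), 2 :=
          Finset.sum_le_sum (fun col _ => hcol col)
      _ = 2 * p := by simp [ZMod.card, mul_comm]
  rw [Set.ncard_eq_toFinset_card S hfin]
  exact this

theorem stmt11 (p : ℕ) (hp : p.Prime) : T (ZMod p × ZMod (p ^ 2)) = 2 * p := by
  haveI : Fact p.Prime := ⟨hp⟩
  haveI : NeZero p := ⟨hp.ne_zero⟩
  have hmem : 2 * p ∈ {n | ∃ S : Set (ZMod p × ZMod (p ^ 2)),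
      S.Finite ∧ S.ncard = n ∧ NoThreeInLine S} := by
    refine ⟨Set.range (lineF p), Set.finite_range _, ?_, lineF_no3 hp⟩
    rw [← Nat.card_coe_set_eq, Nat.card_range_of_injective (lineF_inj hp),
      Nat.card_eq_fintype_card, Fintype.card_prod, ZMod.card, Fintype.card_fin]
    ring
  have hub : ∀ n ∈ {n | ∃ S : Set (ZMod p × ZMod (p ^ 2)),
      S.Finite ∧ S.ncard = n ∧ NoThreeInLine S}, n ≤ 2 * p := by
    rintro n ⟨S, hfin, rfl, hS⟩
    exact upper_bound hp hfin hS
  refine le_antisymm (csSup_le ⟨2 * p, hmem⟩ hub) (le_csSup ⟨2 * p, hub⟩ hmem)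
end

section
/- For any positive integer n, T(Z_2 × Z_{2n}) = 4. -/
/-- Integer arithmetic lemma: if `m ∣ 2k`, `m ∣ 2l` but `m ∤ k`, `m ∤ l`, then `m ∣ k - l`. -/
lemma int_half_lemma (m k l : ℤ) (h2k : m ∣ 2 * k) (h2l : m ∣ 2 * l)
    (hk : ¬ m ∣ k) (hl : ¬ m ∣ l) : m ∣ k - l := by
  have hm2 : 2 ∣ m := by
    rcases Int.even_or_odd m with he | ho
    · exact he.two_dvd
    · exfalso
      obtain ⟨t, rfl⟩ := ho
      apply hk
      have h1 : (2 * t + 1) ∣ (2 * k) * (t + 1) := h2k.mul_right _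
      have h2 : (2 * k) * (t + 1) = k * (2 * t + 1) + k := by ring
      have h3 : (2 * t + 1) ∣ k * (2 * t + 1) := dvd_mul_left _ _
      have := dvd_sub (h2 ▸ h1) h3
      simpa using this
  obtain ⟨m', rfl⟩ := hm2
  rcases eq_or_ne m' 0 with rfl | hm'
  · simp only [mul_zero, zero_dvd_iff] at h2k hk ⊢
    omega
  have hk' : m' ∣ k := (mul_dvd_mul_iff_left (two_ne_zero)).mp h2k
  have hl' : m' ∣ l := (mul_dvd_mul_iff_left (two_ne_zero)).mp h2l
  obtain ⟨t, rfl⟩ := hk'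
  obtain ⟨s, rfl⟩ := hl'
  have ht : ¬ 2 ∣ t := by
    rintro ⟨u, rfl⟩; exact hk ⟨u, by ring⟩
  have hs : ¬ 2 ∣ s := by
    rintro ⟨u, rfl⟩; exact hl ⟨u, by ring⟩
  have : 2 ∣ t - s := by omega
  obtain ⟨u, hu⟩ := this
  exact ⟨u, by rw [← mul_sub, hu]; ring⟩

/-- In any additive group, two distinct nonzero 2-torsion elements cannot both lie in a
cyclic subgroup generated by an element of finite order. -/
lemma two_torsion_unique {G : Type*} [AddCommGroup G] {h x y : G}
    (hm : IsOfFinAddOrder h)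
    (hx : x ∈ AddSubgroup.zmultiples h) (hy : y ∈ AddSubgroup.zmultiples h)
    (hx2 : x + x = 0) (hy2 : y + y = 0) (hx0 : x ≠ 0) (hy0 : y ≠ 0) : x = y := by
  obtain ⟨k, hk⟩ := AddSubgroup.mem_zmultiples_iff.mp hx
  obtain ⟨l, hl⟩ := AddSubgroup.mem_zmultiples_iff.mp hy
  have h2k : (addOrderOf h : ℤ) ∣ 2 * k := by
    rw [addOrderOf_dvd_iff_zsmul_eq_zero, mul_zsmul, hk, two_zsmul, hx2]
  have h2l : (addOrderOf h : ℤ) ∣ 2 * l := by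
    rw [addOrderOf_dvd_iff_zsmul_eq_zero, mul_zsmul, hl, two_zsmul, hy2]
  have hkn : ¬ (addOrderOf h : ℤ) ∣ k := by
    rw [addOrderOf_dvd_iff_zsmul_eq_zero, hk]; exact hx0
  have hln : ¬ (addOrderOf h : ℤ) ∣ l := by
    rw [addOrderOf_dvd_iff_zsmul_eq_zero, hl]; exact hy0
  have := int_half_lemma _ _ _ h2k h2l hkn hln
  rw [addOrderOf_dvd_iff_zsmul_eq_zero, sub_zsmul, hk, hl] at this
  exact eq_of_sub_eq_zero (by rwa [sub_eq_add_neg])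

theorem stmt17 (n : ℕ) (hn : 0 < n) : T (ZMod 2 × ZMod (2 * n)) = 4 := by
  haveI : NeZero (2 * n) := ⟨by omega⟩
  set G := ZMod 2 × ZMod (2 * n)
  -- membership in zmultiples (0,1)
  have memline : ∀ p : G, p.1 = 0 → p ∈ AddSubgroup.zmultiples ((0, 1) : G) := by
    intro p hp
    rw [AddSubgroup.mem_zmultiples_iff]
    refine ⟨(p.2.val : ℤ), ?_⟩
    have hps : p = (0, p.2) := by rw [← hp]
    rw [hps, Prod.smul_mk]
    refine Prod.ext ?_ ?_
    · simp
    · show (p.2.val : ℤ) • (1 : ZMod (2 * n)) = p.2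
      rw [zsmul_eq_mul, mul_one]
      push_cast
      rw [ZMod.natCast_val, ZMod.cast_id]
  -- upper bound: any good set has at most 4 elements
  have upper : ∀ S : Set G, S.Finite → NoThreeInLine S → S.ncard ≤ 4 := by
    intro S hSfin hS
    have hsub : ∀ v : ZMod 2, ({p ∈ S | p.1 = v}).ncard ≤ 2 := by
      intro v
      by_contra hlt
      push_neg at hlt
      have hfin : ({p ∈ S | p.1 = v}).Finite := hSfin.subset (Set.sep_subset _ _)
      rw [Set.two_lt_ncard hfin] at hlt
      obtain ⟨a, ⟨haS, hav⟩, b, ⟨hbS, hbv⟩, c, ⟨hcS, hcv⟩, hab, hac, hbc⟩ := hlt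
      refine hS a haS b hbS c hcS hab hac hbc ⟨a, (0, 1), ?_, ?_, ?_⟩
      · exact memline _ (by rw [Prod.fst_sub, hav, sub_self])
      · exact memline _ (by rw [Prod.fst_sub, hbv, hav, sub_self])
      · exact memline _ (by rw [Prod.fst_sub, hcv, hav, sub_self])
    have hcover : S ⊆ {p ∈ S | p.1 = 0} ∪ {p ∈ S | p.1 = 1} := by
      intro p hp
      have h2 : ∀ x : ZMod 2, x = 0 ∨ x = 1 := by decide
      rcases h2 p.1 with h | h
      · exact Or.inl ⟨hp, h⟩
      · exact Or.inr ⟨hp, h⟩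
    have f0 : ({p ∈ S | p.1 = 0}).Finite := hSfin.subset (Set.sep_subset _ _)
    have f1 : ({p ∈ S | p.1 = 1}).Finite := hSfin.subset (Set.sep_subset _ _)
    calc S.ncard ≤ ({p ∈ S | p.1 = 0} ∪ {p ∈ S | p.1 = 1}).ncard :=
          Set.ncard_le_ncard hcover (f0.union f1)
      _ ≤ ({p ∈ S | p.1 = 0}).ncard + ({p ∈ S | p.1 = 1}).ncard := Set.ncard_union_le _ _
      _ ≤ 4 := by
          have := hsub 0; have := hsub 1; omega
  -- lower bound: an explicit 4-element good set
  have hn' : (n : ZMod (2 * n)) ≠ 0 := by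
    rw [Ne, ZMod.natCast_eq_zero_iff]
    intro hdvd
    have := Nat.le_of_dvd hn hdvd
    omega
  set S0 : Set G := {(0, 0), (1, 0), (0, (n : ZMod (2 * n))), (1, (n : ZMod (2 * n)))} with hS0
  have hone : (1 : ZMod 2) ≠ 0 := by decide
  have hS0card : S0.ncard = 4 := by
    rw [hS0]
    rw [Set.ncard_insert_of_notMem
          (by rintro (h | h | h)
              · exact hone (congrArg Prod.fst h).symm
              · exact hn' (congrArg Prod.snd h).symm
              · exact hone (congrArg Prod.fst h).symm),
        Set.ncard_insert_of_notMem
          (by rintro (h | h)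
              · exact hone (congrArg Prod.fst h)
              · exact hn' (congrArg Prod.snd h).symm),
        Set.ncard_insert_of_notMem
          (by intro h
              exact hone (congrArg Prod.fst h).symm),
        Set.ncard_singleton]
  have hnn : (n : ZMod (2 * n)) + (n : ZMod (2 * n)) = 0 := by
    rw [← Nat.cast_add]
    have : (n + n : ℕ) = 2 * n := by ring
    rw [this, ZMod.natCast_self]
  have hz2 : ∀ x : ZMod 2, x + x = 0 := by decide
  have h2tor : ∀ p ∈ S0, p + p = 0 := by
    rintro p hp
    refine Prod.ext ?_ ?_
    · rw [Prod.fst_add]; exact hz2 p.1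
    · rw [Prod.snd_add]
      rcases hp with rfl | rfl | rfl | rfl <;> simp [hnn]
  have hS0good : NoThreeInLine S0 := by
    intro a ha b hb c hc hab hac hbc ⟨g, h, hag, hbg, hcg⟩
    have hfin : IsOfFinAddOrder h := by
      have : Finite G := by infer_instance
      exact isOfFinAddOrder_of_finite h
    have hx : b - a ∈ AddSubgroup.zmultiples h := by
      have := AddSubgroup.sub_mem _ hbg hag
      simpa using this
    have hy : c - a ∈ AddSubgroup.zmultiples h := by
      have := AddSubgroup.sub_mem _ hcg hag
      simpa using this
    have hx2 : (b - a) + (b - a) = 0 := by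
      have h1 := h2tor a ha; have h2 := h2tor b hb
      have : (b - a) + (b - a) = (b + b) - (a + a) := by abel
      rw [this, h1, h2, sub_zero]
    have hy2 : (c - a) + (c - a) = 0 := by
      have h1 := h2tor a ha; have h3 := h2tor c hc
      have : (c - a) + (c - a) = (c + c) - (a + a) := by abel
      rw [this, h1, h3, sub_zero]
    have hx0 : b - a ≠ 0 := sub_ne_zero.mpr (Ne.symm hab)
    have hy0 : c - a ≠ 0 := sub_ne_zero.mpr (Ne.symm hac)
    have := two_torsion_unique hfin hx hy hx2 hy2 hx0 hy0
    exact hbc (sub_left_inj.mp this)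
  -- combine
  have hmem : 4 ∈ {m | ∃ S : Set G, S.Finite ∧ S.ncard = m ∧ NoThreeInLine S} := by
    refine ⟨S0, ?_, hS0card, hS0good⟩
    apply Set.Finite.insert; apply Set.Finite.insert; apply Set.Finite.insert
    exact Set.finite_singleton _
  have hbdd : ∀ m ∈ {m | ∃ S : Set G, S.Finite ∧ S.ncard = m ∧ NoThreeInLine S}, m ≤ 4 := by
    rintro m ⟨S, hfin, rfl, hgood⟩
    exact upper S hfin hgood
  unfold T
  exact le_antisymm (csSup_le ⟨4, hmem⟩ hbdd) (le_csSup ⟨4, hbdd⟩ hmem)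
end

section
/- For distinct odd primes p and q, the sets X = {(q x² mod p, p x⁴ mod pq) : x = 0,...,(p-1)/2} and Y = {((p-1)/2 - q x² mod p, q(p-1)²/4 - p x⁴ mod pq) : x = 0,...,(p-1)/2}, viewed as subsets of Z_p × Z_{pq}, are disjoint. -/
theorem stmt19 (p q : ℕ) (hp : p.Prime) (hq : q.Prime) (hpq : p ≠ q)
    (hp2 : Odd p) (hq2 : Odd q) :
    Disjoint
      (Set.range fun x : Fin ((p - 1) / 2 + 1) =>
        ((((q : ℤ) * (x : ℤ) ^ 2 : ℤ) : ZMod p),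
          (((p : ℤ) * (x : ℤ) ^ 4 : ℤ) : ZMod (p * q))))
      (Set.range fun x : Fin ((p - 1) / 2 + 1) =>
        (((((p : ℤ) - 1) / 2 - (q : ℤ) * (x : ℤ) ^ 2 : ℤ) : ZMod p),
          (((q : ℤ) * ((p : ℤ) - 1) ^ 2 / 4 - (p : ℤ) * (x : ℤ) ^ 4 : ℤ) : ZMod (p * q)))) := by
  rw [Set.disjoint_left]
  rintro a ⟨x, hx⟩ ⟨y, hy⟩
  obtain ⟨k, hk⟩ := hp2
  have hk0 : k ≠ 0 := by
    rintro rfl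
    have := hp.two_le
    omega
  have hkp : k < p := by omega
  have hsnd : (((p : ℤ) * (x : ℤ) ^ 4 : ℤ) : ZMod (p * q)) =
      (((q : ℤ) * ((p : ℤ) - 1) ^ 2 / 4 - (p : ℤ) * (y : ℤ) ^ 4 : ℤ) : ZMod (p * q)) :=
    congrArg Prod.snd (hx.trans hy.symm)
  have hdiv : (q : ℤ) * ((p : ℤ) - 1) ^ 2 / 4 = (q : ℤ) * (k : ℤ) ^ 2 := by
    have hpk : (p : ℤ) = 2 * k + 1 := by exact_mod_cast congrArg (Nat.cast : ℕ → ℤ) hk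
    rw [hpk]
    have : (q : ℤ) * (2 * (k : ℤ) + 1 - 1) ^ 2 = ((q : ℤ) * (k : ℤ) ^ 2) * 4 := by ring
    rw [this, Int.mul_ediv_cancel _ (by norm_num)]
  rw [hdiv] at hsnd
  have hcast : (((p : ℤ) * (x : ℤ) ^ 4 : ℤ) : ZMod p) =
      (((q : ℤ) * (k : ℤ) ^ 2 - (p : ℤ) * (y : ℤ) ^ 4 : ℤ) : ZMod p) := by
    have := congrArg (ZMod.castHom (dvd_mul_right p q) (ZMod p)) hsnd
    simp only [map_intCast] at this
    exact this
  have hzero : ((((q : ℤ) * (k : ℤ) ^ 2 - (p : ℤ) * (y : ℤ) ^ 4) - (p : ℤ) * (x : ℤ) ^ 4 : ℤ) : ZMod p) = 0 := by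
    push_cast
    rw [sub_eq_zero]
    push_cast at hcast
    exact hcast.symm
  have hdvd : (p : ℤ) ∣ ((q : ℤ) * (k : ℤ) ^ 2 - (p : ℤ) * (y : ℤ) ^ 4) - (p : ℤ) * (x : ℤ) ^ 4 :=
    (ZMod.intCast_zmod_eq_zero_iff_dvd _ p).mp hzero
  have hdvd2 : (p : ℤ) ∣ (q : ℤ) * (k : ℤ) ^ 2 := by
    have : (q : ℤ) * (k : ℤ) ^ 2 = (((q : ℤ) * (k : ℤ) ^ 2 - (p : ℤ) * (y : ℤ) ^ 4) - (p : ℤ) * (x : ℤ) ^ 4)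
        + (p : ℤ) * ((y : ℤ) ^ 4 + (x : ℤ) ^ 4) := by ring
    rw [this]
    exact dvd_add hdvd (Dvd.intro _ rfl)
  have hdvd3 : p ∣ q * k ^ 2 := by exact_mod_cast hdvd2
  rcases (hp.dvd_mul.mp hdvd3) with h | h
  · exact hpq ((Nat.prime_dvd_prime_iff_eq hp hq).mp h)
  · have := hp.dvd_of_dvd_pow h
    have := Nat.le_of_dvd (Nat.pos_of_ne_zero hk0) this
    omega
end
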